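/- arXiv:1802.00767 — 2 statements merged into one kernel-verified Lean document; each statement's English description precedes it below -/
import Mathlib

section
/- For each nonzero integer k, the eigenvalues of the matrix C_k = [[0, ik],[ik, 1]] are λ = 1/2 ± i√(k² − 1/4), and the positive definite Hermitian matrix P_k = [[1, −i/(2k)],[i/(2k), 1]] satisfies C_k* P_k + P_k C_k = P_k, with condition number κ(P_k) = (2|k|+1)/(2|k|−1). -/
/-!
The eigenvalues of a 2×2 matrix `M` are the roots of `μ ^ 2 - (tr M) μ + det M`: for `C_k` this is
`(μ - 1/2) ^ 2 + k ^ 2 - 1/4`, for `P_k` it is `(μ - 1) ^ 2 - 1 / (4 k ^ 2)`, with roots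
`1 ± 1 / (2|k|)`. Since these are positive, the Hermitian matrix `P_k` is positive definite, and
the condition number is their ratio. The Lyapunov identity is an entrywise computation.
-/

open Matrix Complex
open scoped ComplexOrder

namespace Matrix

variable {K n : Type*} [Field K] [Fintype n] [DecidableEq n]

theorem exists_mulVec_eq_smul_iff_isRoot_charpoly (M : Matrix n n K) (μ : K) :
    (∃ v : n → K, v ≠ 0 ∧ M *ᵥ v = μ • v) ↔ M.charpoly.IsRoot μ := by
  rw [Polynomial.IsRoot, eval_charpoly, ← exists_mulVec_eq_zero_iff]
  refine exists_congr fun v => and_congr_right fun _ => ?_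
  rw [sub_mulVec, scalar_apply, ← smul_one_eq_diagonal, smul_mulVec, one_mulVec, sub_eq_zero,
    eq_comm]

theorem exists_mulVec_eq_smul_iff_fin_two (M : Matrix (Fin 2) (Fin 2) K) (μ : K) :
    (∃ v : Fin 2 → K, v ≠ 0 ∧ M *ᵥ v = μ • v) ↔ μ ^ 2 - M.trace * μ + M.det = 0 := by
  rw [exists_mulVec_eq_smul_iff_isRoot_charpoly, charpoly_fin_two]
  simp

theorem IsHermitian.posDef_of_eigenvalue_pos {𝕜 : Type*} [RCLike 𝕜] {A : Matrix n n 𝕜}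
    (hA : A.IsHermitian) (h : ∀ (l : ℝ) (v : n → 𝕜), v ≠ 0 → A *ᵥ v = (l : 𝕜) • v → 0 < l) :
    A.PosDef := by
  refine hA.posDef_iff_eigenvalues_pos.mpr fun i => h _ (hA.eigenvectorBasis i) ?_ ?_
  · exact fun h0 => (hA.eigenvectorBasis.orthonormal.ne_zero i) (by ext j; exact congrFun h0 j)
  · rw [hA.mulVec_eigenvectorBasis, RCLike.real_smul_eq_coe_smul (K := 𝕜)]

end Matrix

namespace GoldsteinTaylor

noncomputable def C (k : ℝ) : Matrix (Fin 2) (Fin 2) ℂ := !![0, I * k; I * k, 1]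

noncomputable def P (k : ℝ) : Matrix (Fin 2) (Fin 2) ℂ := !![1, -I / (2 * k); I / (2 * k), 1]

theorem eigenvalues_C {k : ℝ} (hk : 1 / 4 ≤ k ^ 2) :
    {μ : ℂ | ∃ v : Fin 2 → ℂ, v ≠ 0 ∧ C k *ᵥ v = μ • v} =
      {1 / 2 + I * √(k ^ 2 - 1 / 4), 1 / 2 - I * √(k ^ 2 - 1 / 4)} := by
  have hs : (√(k ^ 2 - 1 / 4) : ℂ) ^ 2 = k ^ 2 - 1 / 4 := by
    rw [← ofReal_pow, Real.sq_sqrt (by linarith)]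
    push_cast; ring
  ext μ
  have hchar : μ ^ 2 - (C k).trace * μ + (C k).det =
      (μ - (1 / 2 + I * √(k ^ 2 - 1 / 4))) * (μ - (1 / 2 - I * √(k ^ 2 - 1 / 4))) := by
    simp only [C, trace_fin_two_of, det_fin_two_of]
    linear_combination ((√(k ^ 2 - 1 / 4) : ℂ) ^ 2 - k ^ 2) * I_sq - hs
  simp only [Set.mem_ofPred_eq, exists_mulVec_eq_smul_iff_fin_two, hchar, mul_eq_zero, sub_eq_zero,
    Set.mem_insert_iff, Set.mem_singleton_iff]

theorem eigenvalues_P {k : ℝ} (hk : k ≠ 0) :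
    {l : ℝ | ∃ v : Fin 2 → ℂ, v ≠ 0 ∧ P k *ᵥ v = (l : ℂ) • v} =
      {1 - 1 / (2 * |k|), 1 + 1 / (2 * |k|)} := by
  have habs : ((|k| : ℝ) : ℂ) ^ 2 = (k : ℂ) ^ 2 := by norm_cast; exact sq_abs k
  ext l
  have hchar : (l : ℂ) ^ 2 - (P k).trace * l + (P k).det =
      (((l - 1) ^ 2 - (1 / (2 * |k|)) ^ 2 : ℝ) : ℂ) := by
    simp only [P, trace_fin_two_of, det_fin_two_of]
    push_cast
    field_simp
    linear_combination ((|k| : ℝ) : ℂ) ^ 2 * I_sq - habs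
  simp only [Set.mem_ofPred_eq, exists_mulVec_eq_smul_iff_fin_two, hchar, ofReal_eq_zero,
    sub_eq_zero, sq_eq_sq_iff_eq_or_eq_neg, Set.mem_insert_iff, Set.mem_singleton_iff]
  constructor <;> rintro (h | h) <;> [right; left; right; left] <;> linarith

theorem isHermitian_P (k : ℝ) : (P k).IsHermitian := by
  ext i j
  fin_cases i <;> fin_cases j <;> simp [P, conjTranspose_apply]

theorem posDef_P {k : ℝ} (hk : 1 / 2 < |k|) : (P k).PosDef := by
  refine (isHermitian_P k).posDef_of_eigenvalue_pos fun l v hv hl => ?_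
  have hmem : l ∈ ({1 - 1 / (2 * |k|), 1 + 1 / (2 * |k|)} : Set ℝ) :=
    eigenvalues_P (abs_pos.mp (by linarith)) ▸ ⟨v, hv, hl⟩
  have hlt : 1 / (2 * |k|) < 1 := by rw [div_lt_one (by linarith)]; linarith
  rcases hmem with rfl | rfl <;> [linarith; positivity]

theorem conjTranspose_C_mul_P_add_P_mul_C {k : ℝ} (hk : k ≠ 0) :
    (C k)ᴴ * P k + P k * C k = P k := by
  ext i j
  fin_cases i <;> fin_cases j <;>
    simp [C, P, mul_apply, Fin.sum_univ_two, conjTranspose_apply] <;>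
    field_simp <;> ring_nf <;> simp only [I_sq] <;> ring

theorem eigenvalue_ratio_P {k : ℝ} (hk : k ≠ 0) {lmin lmax : ℝ}
    (hmin : IsLeast {l : ℝ | ∃ v : Fin 2 → ℂ, v ≠ 0 ∧ P k *ᵥ v = (l : ℂ) • v} lmin)
    (hmax : IsGreatest {l : ℝ | ∃ v : Fin 2 → ℂ, v ≠ 0 ∧ P k *ᵥ v = (l : ℂ) • v} lmax) :
    lmax / lmin = (2 * |k| + 1) / (2 * |k| - 1) := by
  have hpos : 0 < 1 / (2 * |k|) := by positivity
  rw [eigenvalues_P hk] at hmin hmax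
  rw [hmin.unique isLeast_pair, hmax.unique isGreatest_pair, min_eq_left (by linarith),
    max_eq_right (by linarith), ← mul_div_mul_right _ _ (by positivity : 2 * |k| ≠ 0)]
  field_simp

end GoldsteinTaylor

theorem stmt8 (k : ℤ) (hk : k ≠ 0) :
    {lam : ℂ | ∃ v : Fin 2 → ℂ, v ≠ 0 ∧
        (!![0, Complex.I * k; Complex.I * k, 1] : Matrix (Fin 2) (Fin 2) ℂ).mulVec v = lam • v}
      = {(1 / 2 : ℂ) + Complex.I * Real.sqrt ((k : ℝ) ^ 2 - 1 / 4),
         (1 / 2 : ℂ) - Complex.I * Real.sqrt ((k : ℝ) ^ 2 - 1 / 4)} ∧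
    (!![1, -Complex.I / (2 * k); Complex.I / (2 * k), 1] :
        Matrix (Fin 2) (Fin 2) ℂ).PosDef ∧
    (!![0, Complex.I * k; Complex.I * k, 1] : Matrix (Fin 2) (Fin 2) ℂ)ᴴ *
        !![1, -Complex.I / (2 * k); Complex.I / (2 * k), 1] +
      !![1, -Complex.I / (2 * k); Complex.I / (2 * k), 1] *
        !![0, Complex.I * k; Complex.I * k, 1]
      = !![1, -Complex.I / (2 * k); Complex.I / (2 * k), 1] ∧
    (∀ lmin lmax : ℝ,
      IsLeast {l : ℝ | ∃ v : Fin 2 → ℂ, v ≠ 0 ∧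
          (!![1, -Complex.I / (2 * k); Complex.I / (2 * k), 1] :
            Matrix (Fin 2) (Fin 2) ℂ).mulVec v = (l : ℂ) • v} lmin →
      IsGreatest {l : ℝ | ∃ v : Fin 2 → ℂ, v ≠ 0 ∧
          (!![1, -Complex.I / (2 * k); Complex.I / (2 * k), 1] :
            Matrix (Fin 2) (Fin 2) ℂ).mulVec v = (l : ℂ) • v} lmax →
      lmax / lmin = (2 * |(k : ℝ)| + 1) / (2 * |(k : ℝ)| - 1)) := by
  have hk0 : (k : ℝ) ≠ 0 := Int.cast_ne_zero.mpr hk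
  have hk1 : (1 : ℝ) ≤ |(k : ℝ)| := by exact_mod_cast Int.one_le_abs hk
  have hk2 : 1 / 4 ≤ (k : ℝ) ^ 2 := by nlinarith [sq_abs (k : ℝ)]
  simp only [← ofReal_intCast]
  exact ⟨GoldsteinTaylor.eigenvalues_C hk2, GoldsteinTaylor.posDef_P (by linarith),
    GoldsteinTaylor.conjTranspose_C_mul_P_add_P_mul_C hk0,
    fun _ _ => GoldsteinTaylor.eigenvalue_ratio_P hk0⟩
end

section
/- Let C ∈ ℂ^{2×2} be diagonalizable with eigenvalues λ₁, λ₂ satisfying Re λ₁ < Re λ₂ and Im λ₁ = Im λ₂, with normalized eigenvectors v₁, v₂, and α = |⟨v₁, v₂⟩| ∈ (0,1). If w₁ is the normalized eigenvector of C* with C*w₁ = conj(λ₁) w₁ and ⟨w₁, v₂⟩ = 0 normalization ⟨w₁, v₁⟩ real positive, then the solution f of f' = −Cf with f(0) = w₁ satisfies lim_{t→∞} e^{Re λ₁ t} ‖f(t)‖₂ / ‖f(0)‖₂ = 1/√(1−α²). -/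
open Matrix Complex Finset Filter WithLp

open scoped InnerProductSpace

/-!
Unit vectors `w₁ ⊥ v₂` form an orthonormal basis of `ℂ²`. Expanding `v₁ = p w₁ + c v₂` in it gives
`|p|² + |c|² = 1` with `|c| = α`, so the positive real `p = ⟨w₁, v₁⟩` is `√(1 - α²)` and
`w₁ = p⁻¹ (v₁ - c v₂)`. By uniqueness for the linear ODE, `f(t) = p⁻¹ (e^{-λ₁t} v₁ - c e^{-λ₂t} v₂)`.
After multiplying by `e^{λ₁t}` the second mode decays like `e^{(Re λ₁ - Re λ₂)t}`, leaving
`‖p⁻¹ v₁‖ = 1/√(1 - α²)`.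
-/

theorem EuclideanSpace.norm_toLp_eq_sqrt {𝕜 ι : Type*} [RCLike 𝕜] [Fintype ι] (x : ι → 𝕜) :
    ‖toLp 2 x‖ = √(∑ i, ‖x i‖ ^ 2) := by
  simp [EuclideanSpace.norm_eq]

theorem EuclideanSpace.inner_toLp_toLp_eq_star_dotProduct {𝕜 ι : Type*} [RCLike 𝕜] [Fintype ι]
    (x y : ι → 𝕜) : ⟪toLp 2 x, toLp 2 y⟫_𝕜 = star x ⬝ᵥ y := by
  rw [EuclideanSpace.inner_toLp_toLp, dotProduct_comm]

section CardEqFinrank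

variable {𝕜 E ι : Type*} [RCLike 𝕜] [NormedAddCommGroup E] [InnerProductSpace 𝕜 E]
  [FiniteDimensional 𝕜 E] [Fintype ι] {v : ι → E}

noncomputable def Orthonormal.toOrthonormalBasisOfCardEqFinrank (hv : Orthonormal 𝕜 v)
    (hcard : Fintype.card ι = Module.finrank 𝕜 E) : OrthonormalBasis ι 𝕜 E :=
  OrthonormalBasis.mk hv (hv.linearIndependent.span_eq_top_of_card_eq_finrank' hcard).ge

@[simp]
theorem Orthonormal.coe_toOrthonormalBasisOfCardEqFinrank (hv : Orthonormal 𝕜 v)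
    (hcard : Fintype.card ι = Module.finrank 𝕜 E) :
    ⇑(hv.toOrthonormalBasisOfCardEqFinrank hcard) = v :=
  OrthonormalBasis.coe_mk _ _

theorem Orthonormal.sum_inner_smul_eq_of_card_eq_finrank (hv : Orthonormal 𝕜 v)
    (hcard : Fintype.card ι = Module.finrank 𝕜 E) (x : E) :
    ∑ i, ⟪v i, x⟫_𝕜 • v i = x := by
  simpa using (hv.toOrthonormalBasisOfCardEqFinrank hcard).sum_repr' x

theorem Orthonormal.sum_sq_norm_inner_of_card_eq_finrank (hv : Orthonormal 𝕜 v)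
    (hcard : Fintype.card ι = Module.finrank 𝕜 E) (x : E) :
    ∑ i, ‖⟪v i, x⟫_𝕜‖ ^ 2 = ‖x‖ ^ 2 := by
  simpa using (hv.toOrthonormalBasisOfCardEqFinrank hcard).sum_sq_norm_inner_right x

end CardEqFinrank

theorem Orthonormal.eq_inv_sqrt_smul_sub_of_finrank_eq_two {E : Type*} [NormedAddCommGroup E]
    [InnerProductSpace ℂ E] [FiniteDimensional ℂ E] (h2 : Module.finrank ℂ E = 2)
    {W V x : E} (hon : Orthonormal ℂ ![W, V]) (hx : ‖x‖ = 1)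
    (hre : 0 < (⟪W, x⟫_ℂ).re) (him : (⟪W, x⟫_ℂ).im = 0) :
    W = ((√(1 - ‖⟪V, x⟫_ℂ‖ ^ 2) : ℝ) : ℂ)⁻¹ • (x - ⟪V, x⟫_ℂ • V) := by
  have hcard : Fintype.card (Fin 2) = Module.finrank ℂ E := by simp [h2]
  have hexp := hon.sum_inner_smul_eq_of_card_eq_finrank hcard x
  have hpyth := hon.sum_sq_norm_inner_of_card_eq_finrank hcard x
  simp only [Fin.sum_univ_two, Matrix.cons_val_zero, Matrix.cons_val_one] at hexp hpyth
  have hreal : ⟪W, x⟫_ℂ = ((⟪W, x⟫_ℂ).re : ℂ) := Complex.ext (by simp) (by simp [him])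
  have hsq : (⟪W, x⟫_ℂ).re ^ 2 = 1 - ‖⟪V, x⟫_ℂ‖ ^ 2 := by
    rw [hreal, Complex.norm_real, Real.norm_eq_abs, sq_abs, hx] at hpyth
    linarith
  have hp : ⟪W, x⟫_ℂ = ((√(1 - ‖⟪V, x⟫_ℂ‖ ^ 2) : ℝ) : ℂ) := by
    rw [← hsq, Real.sqrt_sq hre.le, ← hreal]
  have hp0 : ⟪W, x⟫_ℂ ≠ 0 := fun h => by simp [h] at hre
  rw [← hp, ← eq_sub_of_add_eq hexp, inv_smul_smul₀ hp0]

theorem eq_inv_sqrt_smul_sub_of_star_dotProduct_eq_zero {v₁ v₂ w : Fin 2 → ℂ}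
    (hv₁ : √(∑ i, ‖v₁ i‖ ^ 2) = 1) (hv₂ : √(∑ i, ‖v₂ i‖ ^ 2) = 1) (hw : √(∑ i, ‖w i‖ ^ 2) = 1)
    (hwv₂ : star w ⬝ᵥ v₂ = 0) (hre : 0 < (star w ⬝ᵥ v₁).re) (him : (star w ⬝ᵥ v₁).im = 0) :
    w = ((√(1 - ‖star v₂ ⬝ᵥ v₁‖ ^ 2) : ℝ) : ℂ)⁻¹ • (v₁ - (star v₂ ⬝ᵥ v₁) • v₂) := by
  simp only [← EuclideanSpace.norm_toLp_eq_sqrt] at hv₁ hv₂ hw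
  simp only [← EuclideanSpace.inner_toLp_toLp_eq_star_dotProduct] at hwv₂ hre him ⊢
  have hon : Orthonormal ℂ ![toLp 2 w, toLp 2 v₂] := by
    simp only [orthonormal_vecCons_iff, hw, hv₂, Fin.forall_fin_one, cons_val_zero, hwv₂]
    simp
  apply toLp_injective 2
  rw [toLp_smul, toLp_sub, toLp_smul]
  exact hon.eq_inv_sqrt_smul_sub_of_finrank_eq_two (by simp) hv₁ hre him

theorem Matrix.hasDerivAt_cexp_smul_of_mulVec_eq {ι : Type*} [Fintype ι]
    {C : Matrix ι ι ℂ} {μ : ℂ} {v : ι → ℂ} (hv : C *ᵥ v = μ • v) (t : ℝ) :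
    HasDerivAt (fun s : ℝ => cexp (-(μ * s)) • v) (-(C *ᵥ (cexp (-(μ * t)) • v))) t := by
  have hlin : HasDerivAt (fun s : ℝ => -(μ * s)) (-μ) t :=
    ((hasDerivAt_id t).ofReal_comp.const_mul μ).neg.congr_deriv (by simp)
  refine (hlin.cexp.smul_const v).congr_deriv ?_
  rw [mulVec_smul, hv, smul_smul, ← neg_smul]
  ring_nf

theorem Matrix.eq_of_hasDerivAt_mulVec {𝕜 ι : Type*} [RCLike 𝕜] [Fintype ι] (A : Matrix ι ι 𝕜)
    {f g : ℝ → ι → 𝕜} (hf : ∀ t, HasDerivAt f (A *ᵥ f t) t)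
    (hg : ∀ t, HasDerivAt g (A *ᵥ g t) t) (h0 : f 0 = g 0) : f = g :=
  ODE_solution_unique_univ (v := fun _ x => A *ᵥ x) (s := fun _ => Set.univ)
    (fun _ => (LinearMap.toContinuousLinearMap A.mulVecLin).lipschitz.lipschitzOnWith)
    (fun t => ⟨hf t, trivial⟩) (fun t => ⟨hg t, trivial⟩) h0

theorem Matrix.eq_cexp_smul_add_cexp_smul_of_hasDerivAt {ι : Type*} [Fintype ι]
    {C : Matrix ι ι ℂ} {μ₁ μ₂ : ℂ} {x y : ι → ℂ} (hx : C *ᵥ x = μ₁ • x) (hy : C *ᵥ y = μ₂ • y)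
    {f : ℝ → ι → ℂ} (hf : ∀ t, HasDerivAt f (-(C *ᵥ f t)) t) (h0 : f 0 = x + y) :
    f = fun t : ℝ => cexp (-(μ₁ * t)) • x + cexp (-(μ₂ * t)) • y := by
  refine (-C).eq_of_hasDerivAt_mulVec (fun t => by simpa [neg_mulVec] using hf t)
    (fun t => ?_) (by simpa using h0)
  refine ((hasDerivAt_cexp_smul_of_mulVec_eq hx t).add
    (hasDerivAt_cexp_smul_of_mulVec_eq hy t)).congr_deriv ?_
  rw [neg_mulVec, mulVec_add, neg_add]

theorem tendsto_exp_mul_norm_cexp_smul_add_cexp_smul {E : Type*} [NormedAddCommGroup E]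
    [NormedSpace ℂ E] {μ₁ μ₂ : ℂ} (hμ : μ₁.re < μ₂.re) (x y : E) :
    Tendsto (fun t : ℝ => Real.exp (μ₁.re * t) * ‖cexp (-(μ₁ * t)) • x + cexp (-(μ₂ * t)) • y‖)
      atTop (nhds ‖x‖) := by
  have hrescale : ∀ t : ℝ, Real.exp (μ₁.re * t) * ‖cexp (-(μ₁ * t)) • x + cexp (-(μ₂ * t)) • y‖
      = ‖x + cexp ((μ₁ - μ₂) * t) • y‖ := by
    intro t
    rw [show Real.exp (μ₁.re * t) = ‖cexp (μ₁ * t)‖ by simp [Complex.norm_exp], ← norm_smul,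
      smul_add, smul_smul, smul_smul, ← Complex.exp_add, ← Complex.exp_add, add_neg_cancel,
      Complex.exp_zero, one_smul, ← sub_eq_add_neg, ← sub_mul]
  have hdecay : Tendsto (fun t : ℝ => cexp ((μ₁ - μ₂) * t)) atTop (nhds 0) := by
    refine Complex.tendsto_exp_nhds_zero_iff.2 ?_
    simpa using (tendsto_const_mul_atBot_of_neg (sub_neg.2 hμ)).2 tendsto_id
  simpa [hrescale] using ((hdecay.smul_const y).const_add x).norm

theorem stmt19_general (C : Matrix (Fin 2) (Fin 2) ℂ) (lam1 lam2 : ℂ)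
    (v1 v2 w1 : Fin 2 → ℂ) (α : ℝ)
    (he1 : C.mulVec v1 = lam1 • v1) (he2 : C.mulVec v2 = lam2 • v2)
    (hre : lam1.re < lam2.re)
    (hn1 : Real.sqrt (∑ i, ‖v1 i‖ ^ 2) = 1) (hn2 : Real.sqrt (∑ i, ‖v2 i‖ ^ 2) = 1)
    (hα : α = ‖star v1 ⬝ᵥ v2‖)
    (hwn : Real.sqrt (∑ i, ‖w1 i‖ ^ 2) = 1)
    (hworth : star w1 ⬝ᵥ v2 = 0)
    (hwre : 0 < (star w1 ⬝ᵥ v1).re ∧ (star w1 ⬝ᵥ v1).im = 0)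
    (f : ℝ → Fin 2 → ℂ) (hf : ∀ t : ℝ, HasDerivAt f (-(C.mulVec (f t))) t)
    (hf0 : f 0 = w1) :
    Tendsto (fun t : ℝ =>
        Real.exp (lam1.re * t) * Real.sqrt (∑ i, ‖f t i‖ ^ 2) /
          Real.sqrt (∑ i, ‖f 0 i‖ ^ 2))
      atTop (nhds (1 / Real.sqrt (1 - α ^ 2))) := by
  have hc : ‖star v2 ⬝ᵥ v1‖ = α := by rw [star_dotProduct, norm_star, hα]
  have hw1 := eq_inv_sqrt_smul_sub_of_star_dotProduct_eq_zero hn1 hn2 hwn hworth hwre.1 hwre.2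
  rw [hc] at hw1
  set q : ℂ := ((√(1 - α ^ 2) : ℝ) : ℂ)⁻¹
  set c : ℂ := star v2 ⬝ᵥ v1
  have hsol := eq_cexp_smul_add_cexp_smul_of_hasDerivAt
    (by rw [mulVec_smul, he1, smul_comm] : C *ᵥ (q • v1) = lam1 • (q • v1))
    (by rw [mulVec_smul, he2, smul_comm] : C *ᵥ ((-(q * c)) • v2) = lam2 • ((-(q * c)) • v2))
    hf (by rw [hf0, hw1]; module)
  have hlim := tendsto_exp_mul_norm_cexp_smul_add_cexp_smul hre (toLp 2 (q • v1))
    (toLp 2 ((-(q * c)) • v2))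
  have hq : ‖toLp 2 (q • v1)‖ = 1 / √(1 - α ^ 2) := by
    rw [toLp_smul, norm_smul, EuclideanSpace.norm_toLp_eq_sqrt, hn1, mul_one, norm_inv,
      Complex.norm_real, Real.norm_of_nonneg (Real.sqrt_nonneg _), one_div]
  rw [hq] at hlim
  refine hlim.congr fun t => ?_
  rw [hf0, hwn, div_one, hsol, ← EuclideanSpace.norm_toLp_eq_sqrt]
  simp [toLp_add, toLp_smul]

theorem stmt19 (C : Matrix (Fin 2) (Fin 2) ℂ) (lam1 lam2 : ℂ)
    (v1 v2 w1 : Fin 2 → ℂ) (α : ℝ)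
    (hv1 : v1 ≠ 0) (hv2 : v2 ≠ 0)
    (he1 : C.mulVec v1 = lam1 • v1) (he2 : C.mulVec v2 = lam2 • v2)
    (hre : lam1.re < lam2.re) (him : lam1.im = lam2.im)
    (hn1 : Real.sqrt (∑ i, ‖v1 i‖ ^ 2) = 1) (hn2 : Real.sqrt (∑ i, ‖v2 i‖ ^ 2) = 1)
    (hα : α = ‖star v1 ⬝ᵥ v2‖) (hα0 : 0 < α) (hα1 : α < 1)
    (hw1 : Cᴴ.mulVec w1 = (starRingEnd ℂ) lam1 • w1)
    (hwn : Real.sqrt (∑ i, ‖w1 i‖ ^ 2) = 1)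
    (hworth : star w1 ⬝ᵥ v2 = 0)
    (hwre : 0 < (star w1 ⬝ᵥ v1).re ∧ (star w1 ⬝ᵥ v1).im = 0)
    (f : ℝ → Fin 2 → ℂ) (hf : ∀ t : ℝ, HasDerivAt f (-(C.mulVec (f t))) t)
    (hf0 : f 0 = w1) :
    Tendsto (fun t : ℝ =>
        Real.exp (lam1.re * t) * Real.sqrt (∑ i, ‖f t i‖ ^ 2) /
          Real.sqrt (∑ i, ‖f 0 i‖ ^ 2))
      atTop (nhds (1 / Real.sqrt (1 - α ^ 2))) :=
  stmt19_general C lam1 lam2 v1 v2 w1 α he1 he2 hre hn1 hn2 hα hwn hworth hwre f hf hf0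
end
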